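/- arXiv:1804.01018 — 2 statements merged into one kernel-verified Lean document; each statement's English description precedes it below -/
import Mathlib

section
/- Let m ≥ 1 be a natural number, ρ ∈ [1/2, 1], β = 2ρ - 1, p_i = ρ·2(m-i)/m² + 1/m² + (1-ρ)·2(i-1)/m², and q_i = (1-β)/m + β·(2(m-i)+1)/m². Then for every 1 ≤ k ≤ m, ∑_{i=1}^k p_i ≥ ∑_{i=1}^k q_i; i.e., p majorizes q. -/
theorem stmt3 (m : ℕ) (hm : 1 ≤ m) (ρ β : ℝ) (hρ1 : 1 / 2 ≤ ρ) (hρ2 : ρ ≤ 1)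
    (hβ : β = 2 * ρ - 1)
    (p q : ℕ → ℝ)
    (hp : ∀ i, p i = ρ * (2 * ((m : ℝ) - i)) / m ^ 2 + 1 / m ^ 2
        + (1 - ρ) * (2 * ((i : ℝ) - 1)) / m ^ 2)
    (hq : ∀ i, q i = (1 - β) / m + β * (2 * ((m : ℝ) - i) + 1) / m ^ 2)
    (k : ℕ) (hk1 : 1 ≤ k) (hk2 : k ≤ m) :
    ∑ i ∈ Finset.Icc 1 k, p i ≥ ∑ i ∈ Finset.Icc 1 k, q i := by
  have hm0 : (m : ℝ) ≠ 0 := by positivity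
  apply ge_of_eq
  refine Finset.sum_congr rfl fun i _ => ?_
  rw [hp, hq, hβ]
  field_simp
  ring
end

section
/- Consider n threads each performing a sequence of non-overlapping operations, where each operation op has a start time s and finish time f with s < f, operations by the same thread satisfy s_{next} > f_{prev}, and finish times are distinct integers (one operation finishes per time step). Define the contention ℓ of an operation finishing at time f with start time s as the number of operations op' with s ≤ f' < f. Then among any Cn consecutive time steps t, t+1, …, t+Cn−1, fewer than n of the operations finishing in this window have contention ℓ > Cn. -/
/-!
A bad operation `j` (contention `> Cn`) in the window has more than `Cn` operations finishing in
`[s j, f j)`, but at most `f j - t < Cn` of them finish in `[t, f j)`; so one of them, `x`,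
finishes in `[s j, t)`. Hence every bad operation is live at time `t`, and no two of them share a
thread. If moreover `j` is the bad operation starting last, the thread of `x` carries no bad
operation, as that one would start after `f x ≥ s j`. So the bad operations occupy at most
`n - 1` threads.
-/

open Finset

section Counting

variable {ι : Type*} [Fintype ι] {f : ι → ℤ}

theorem card_filter_Ico_le_of_injective (hf : Function.Injective f) (a b : ℤ) :
    #{x | a ≤ f x ∧ f x < b} ≤ (b - a).toNat := by
  rw [← Int.card_Ico]
  refine card_le_card_of_injOn f (fun x hx => ?_) hf.injOn
  simpa using hx

theorem exists_lt_of_toNat_sub_lt_card_filter_Ico (hf : Function.Injective f) {a b t : ℤ}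
    (hcard : (b - t).toNat < #{x | a ≤ f x ∧ f x < b}) :
    ∃ x, a ≤ f x ∧ f x < t := by
  by_contra! hlate
  have hsub :
      univ.filter (fun x => a ≤ f x ∧ f x < b) ⊆ univ.filter (fun x => t ≤ f x ∧ f x < b) :=
    monotone_filter_right univ fun x _ hx => ⟨hlate x hx.1, hx.2⟩
  have := (card_le_card hsub).trans (card_filter_Ico_le_of_injective hf t b)
  omega

end Counting

theorem injOn_of_start_lt_le_finish {ι κ : Type*} {thread : ι → κ} {s f : ι → ℤ}
    (hf : Function.Injective f)
    (hthread : ∀ op op', thread op = thread op' → f op < f op' → f op < s op')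
    {S : Set ι} {t : ℤ} (hlive : ∀ j ∈ S, s j < t ∧ t ≤ f j) :
    S.InjOn thread := by
  intro i hi j hj hij
  by_contra hne
  rcases (hf.ne hne).lt_or_gt with hlt | hgt
  · linarith [hthread i j hij hlt, hlive i hi, hlive j hj]
  · linarith [hthread j i hij.symm hgt, hlive i hi, hlive j hj]

theorem stmt5_general {ι : Type*} [Fintype ι]
    (n C : ℕ) (hn : 0 < n)
    (thread : ι → Fin n) (s f : ι → ℤ)
    (hinj : Function.Injective f)
    (hthread : ∀ op op', thread op = thread op' → f op < f op' → f op < s op')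
    (contention : ι → ℕ)
    (hcont : ∀ op, contention op
      = (Finset.univ.filter (fun op' => s op ≤ f op' ∧ f op' < f op)).card)
    (t : ℤ) :
    (Finset.univ.filter (fun op : ι =>
        t ≤ f op ∧ f op ≤ t + C * n - 1 ∧ C * n < contention op)).card < n := by
  set S := Finset.univ.filter (fun op : ι =>
    t ≤ f op ∧ f op ≤ t + C * n - 1 ∧ C * n < contention op)
  have hearly : ∀ j ∈ S, ∃ x, s j ≤ f x ∧ f x < t := by
    intro j hj
    simp only [S, mem_filter, mem_univ, true_and] at hj
    refine exists_lt_of_toNat_sub_lt_card_filter_Ico hinj (b := f j) ?_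
    rw [← hcont]
    omega
  rcases S.eq_empty_or_nonempty with hempty | hne
  · rwa [hempty, card_empty]
  obtain ⟨j, hjS, hjmax⟩ := S.exists_max_image s hne
  obtain ⟨x, hjx, hxt⟩ := hearly j hjS
  have hinjOn : Set.InjOn thread S := injOn_of_start_lt_le_finish hinj hthread fun i hi => by
    obtain ⟨y, hiy, hyt⟩ := hearly i hi
    exact ⟨hiy.trans_lt hyt, (mem_filter.mp hi).2.1⟩
  have hfree : thread x ∉ S.image thread := by
    intro hx
    obtain ⟨k, hkS, hk⟩ := mem_image.mp hx
    have hxk : f x < f k := hxt.trans_le (mem_filter.mp hkS).2.1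
    linarith [hthread x k hk.symm hxk, hjmax k hkS]
  calc #S = #(S.image thread) := (card_image_of_injOn hinjOn).symm
    _ < #(univ : Finset (Fin n)) := card_lt_univ_of_notMem hfree
    _ = n := by rw [card_univ, Fintype.card_fin]

theorem stmt5 {ι : Type*} [Fintype ι] [DecidableEq ι]
    (n C : ℕ) (hn : 0 < n)
    (thread : ι → Fin n) (s f : ι → ℤ)
    (hsf : ∀ op, s op < f op)
    (hinj : Function.Injective f)
    (hthread : ∀ op op', thread op = thread op' → f op < f op' → f op < s op')
    (contention : ι → ℕ)
    (hcont : ∀ op, contention op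
      = (Finset.univ.filter (fun op' => s op ≤ f op' ∧ f op' < f op)).card)
    (t : ℤ) :
    (Finset.univ.filter (fun op : ι =>
        t ≤ f op ∧ f op ≤ t + C * n - 1 ∧ C * n < contention op)).card < n :=
  stmt5_general n C hn thread s f hinj hthread contention hcont t
end
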